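/- The lengths of factorizations of products of the fixed irreducible X with a varying irreducible element of Int(ℤ) are unbounded: for every natural number N there exists an irreducible H ∈ Int(ℤ) such that the set of lengths of X · H in Int(ℤ) contains an element greater than or equal to N. -/

import Mathlib

/-!
Put `n + 1 = 2 ^ (N + 1)` and `H = binom(X - 1, n)`. The recursion of the falling factorial gives
`X * binom(X - 1, n) = (n + 1) * binom(X, n + 1) = 2 ^ (N + 1) * binom(X, n + 1)`, a factorization
of length `N + 2`, once its factors are known to be irreducible. The prime `2` stays irreducible
because the factors of a nonzero constant are constants. A polynomial `f ∈ Int(ℤ)` of degree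
`m ≥ 1` with leading coefficient `1 / m!` is irreducible: the `d`-th forward difference of an
integer-valued polynomial of degree `d` is the constant `d! * lc`, so `d! * lc ∈ ℤ` for each
factor, and a factorization `f = g * h` into degrees `i + j = m` then forces `binom(m, i) ∣ 1`.
-/

open Polynomial

/-- The ring of integer-valued polynomials `Int(ℤ) = {f ∈ ℚ[X] | f(ℤ) ⊆ ℤ}`,
as a subring of ℚ[X]. -/
noncomputable def IntValued : Subring (Polynomial ℚ) where
  carrier := {f | ∀ c : ℤ, ∃ m : ℤ, f.eval (c : ℚ) = (m : ℚ)}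
  zero_mem' := fun c => ⟨0, by simp⟩
  one_mem' := fun c => ⟨1, by simp⟩
  add_mem' := by
    rintro f g hf hg c
    obtain ⟨m, hm⟩ := hf c
    obtain ⟨n, hn⟩ := hg c
    exact ⟨m + n, by simp [hm, hn]⟩
  mul_mem' := by
    rintro f g hf hg c
    obtain ⟨m, hm⟩ := hf c
    obtain ⟨n, hn⟩ := hg c
    exact ⟨m * n, by simp [hm, hn]⟩
  neg_mem' := by
    rintro f hf c
    obtain ⟨m, hm⟩ := hf c
    exact ⟨-m, by simp [hm]⟩

/-- The polynomial `X` as an element of `Int(ℤ)`. -/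
noncomputable def Xiv : IntValued := ⟨Polynomial.X, fun c => ⟨c, by simp⟩⟩

open scoped Nat

theorem choose_mul_eq_one_of_factorial_mul_eq {i j : ℕ} {a : ℤ}
    (h : ((i + j)! : ℤ) * a = i ! * j !) : ((i + j).choose j : ℤ) * a = 1 := by
  have hfact : (i ! * j ! : ℤ) ≠ 0 := by positivity
  refine mul_left_cancel₀ hfact ?_
  calc (i ! * j ! : ℤ) * ((i + j).choose j * a) = ((i + j)! : ℤ) * a := by
        rw [← Nat.add_choose_mul_factorial_mul_factorial i j]; push_cast; ring
    _ = i ! * j ! * 1 := by rw [h, mul_one]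

noncomputable def binomialPoly (m : ℕ) : ℚ[X] := C (m ! : ℚ)⁻¹ * descPochhammer ℚ m

theorem binomialPoly_mem (m : ℕ) : binomialPoly m ∈ IntValued := by
  intro c
  refine ⟨Ring.choose c m, ?_⟩
  have h := Ring.descPochhammer_eq_factorial_smul_choose c m
  rw [← eval_eq_smeval, nsmul_eq_mul] at h
  rw [binomialPoly, eval_mul, eval_C, ← descPochhammer_eval_cast, h]
  push_cast
  field_simp

theorem natDegree_binomialPoly (m : ℕ) : (binomialPoly m).natDegree = m := by
  rw [binomialPoly, natDegree_C_mul (by positivity), descPochhammer_natDegree]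

theorem leadingCoeff_binomialPoly (m : ℕ) : (binomialPoly m).leadingCoeff = (m ! : ℚ)⁻¹ := by
  rw [binomialPoly, leadingCoeff_mul, leadingCoeff_C, (monic_descPochhammer ℚ m).leadingCoeff,
    mul_one]

theorem X_mul_binomialPoly_comp_X_sub_one (n : ℕ) :
    X * (binomialPoly n).comp (X - 1) = (n + 1 : ℚ[X]) * binomialPoly (n + 1) := by
  rw [binomialPoly, binomialPoly, mul_comp, C_comp, mul_left_comm, ← descPochhammer_succ_left,
    ← mul_assoc, ← C_eq_natCast, ← C_1, ← C_add, ← C_mul, Nat.factorial_succ]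
  congr 2
  push_cast
  field_simp

namespace IntValued

theorem comp_mem {f g : ℚ[X]} (hf : f ∈ IntValued) (hg : g ∈ IntValued) :
    f.comp g ∈ IntValued := by
  intro c
  obtain ⟨m, hm⟩ := hg c
  obtain ⟨k, hk⟩ := hf m
  exact ⟨k, by rw [eval_comp, hm, hk]⟩

theorem exists_eq_factorial_mul_leadingCoeff {f : ℚ[X]} (hf : f ∈ IntValued) :
    ∃ m : ℤ, (f.natDegree ! : ℚ) * f.leadingCoeff = m := by
  set S : Set (ℚ → ℚ) := {g | ∀ c : ℤ, ∃ m : ℤ, g c = m}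
  have hΔ : Set.MapsTo (fwdDiff 1) S S := fun g hg c => by
    obtain ⟨a, ha⟩ := hg (c + 1)
    obtain ⟨b, hb⟩ := hg c
    exact ⟨a - b, by simp only [fwdDiff]; push_cast at ha; rw [ha, hb]; push_cast; ring⟩
  obtain ⟨m, hm⟩ := hΔ.iterate f.natDegree (show (fun x => f.eval x) ∈ S from hf) 0
  rw [fwdDiff_iter_degree_eq_factorial] at hm
  exact ⟨m, by simpa [mul_comm] using hm⟩

theorem exists_eq_intCast_of_natDegree_eq_zero {g : IntValued} (hg : (g : ℚ[X]).natDegree = 0) :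
    ∃ z : ℤ, g = z := by
  obtain ⟨z, hz⟩ := g.2 0
  refine ⟨z, Subtype.ext ?_⟩
  rw [eq_C_of_natDegree_eq_zero hg, eval_C] at hz
  rw [eq_C_of_natDegree_eq_zero hg, hz, Subring.coe_intCast, C_eq_intCast]

theorem natDegree_eq_zero_of_isUnit {g : IntValued} (hg : IsUnit g) : (g : ℚ[X]).natDegree = 0 :=
  Polynomial.natDegree_eq_zero_of_isUnit (hg.map IntValued.subtype)

theorem exists_intCast_of_mul_eq_intCast {g h : IntValued} {a : ℤ} (ha : a ≠ 0)
    (hgh : g * h = a) : ∃ z w : ℤ, g = z ∧ h = w ∧ z * w = a := by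
  have hpoly : (g : ℚ[X]) * h = a := by
    rw [← Subring.coe_intCast, ← hgh, Subring.coe_mul]
  have hgh0 : (g : ℚ[X]) * h ≠ 0 := hpoly ▸ Int.cast_ne_zero.mpr ha
  have hdeg := congrArg natDegree hpoly
  rw [natDegree_mul (left_ne_zero_of_mul hgh0) (right_ne_zero_of_mul hgh0),
    natDegree_intCast] at hdeg
  obtain ⟨z, rfl⟩ := exists_eq_intCast_of_natDegree_eq_zero (g := g) (by omega)
  obtain ⟨w, rfl⟩ := exists_eq_intCast_of_natDegree_eq_zero (g := h) (by omega)
  exact ⟨z, w, rfl, rfl, by exact_mod_cast hgh⟩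

theorem irreducible_intCast {p : ℤ} (hp : Irreducible p) : Irreducible (p : IntValued) where
  not_isUnit hu := by
    obtain ⟨v, hv⟩ := hu.exists_right_inv
    obtain ⟨z, w, hz, -, hzw⟩ := exists_intCast_of_mul_eq_intCast one_ne_zero
      (hv.trans Int.cast_one.symm)
    exact hp.not_isUnit (IsUnit.of_mul_eq_one w (by rwa [Int.cast_injective hz]))
  isUnit_or_isUnit g h hgh := by
    obtain ⟨z, w, rfl, rfl, hzw⟩ := exists_intCast_of_mul_eq_intCast hp.ne_zero hgh.symm
    exact (hp.isUnit_or_isUnit hzw.symm).imp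
      (·.map (Int.castRingHom _)) (·.map (Int.castRingHom _))

theorem isUnit_of_natDegree_eq_zero {g : IntValued} (hg : (g : ℚ[X]).natDegree = 0) {u : ℤ}
    (hu : IsUnit u) (hlc : (g : ℚ[X]).leadingCoeff = u) : IsUnit g := by
  obtain ⟨z, rfl⟩ := exists_eq_intCast_of_natDegree_eq_zero hg
  rw [Subring.coe_intCast, ← C_eq_intCast, leadingCoeff_C, Int.cast_inj] at hlc
  exact hlc ▸ hu.map (Int.castRingHom IntValued)

theorem irreducible_of_leadingCoeff_eq_inv_factorial {f : IntValued}
    (hdeg : (f : ℚ[X]).natDegree ≠ 0)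
    (hlc : (f : ℚ[X]).leadingCoeff = ((f : ℚ[X]).natDegree ! : ℚ)⁻¹) : Irreducible f := by
  refine ⟨fun hu => hdeg (natDegree_eq_zero_of_isUnit hu), fun g h hgh => ?_⟩
  have hpoly : (f : ℚ[X]) = g * h := by rw [hgh, Subring.coe_mul]
  have hf0 : (g : ℚ[X]) * h ≠ 0 := hpoly ▸ ne_zero_of_natDegree_gt (Nat.pos_of_ne_zero hdeg)
  rw [hpoly, natDegree_mul (left_ne_zero_of_mul hf0) (right_ne_zero_of_mul hf0),
    leadingCoeff_mul] at hlc
  obtain ⟨u, hu⟩ := exists_eq_factorial_mul_leadingCoeff g.2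
  obtain ⟨v, hv⟩ := exists_eq_factorial_mul_leadingCoeff h.2
  set i := (g : ℚ[X]).natDegree
  set j := (h : ℚ[X]).natDegree
  have hfact : ((i + j)! : ℤ) * (u * v) = i ! * j ! := by
    qify
    rw [← hu, ← hv, mul_mul_mul_comm, hlc]
    field_simp
  have hchoose := choose_mul_eq_one_of_factorial_mul_eq hfact
  have hc1 : ((i + j).choose j : ℤ) = 1 := Int.eq_one_of_mul_eq_one_right (by positivity) hchoose
  have huv : u * v = 1 := by simpa [hc1] using hchoose
  rcases Nat.choose_eq_one_iff.mp (by exact_mod_cast hc1) with hj | hi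
  · right
    exact isUnit_of_natDegree_eq_zero hj (IsUnit.of_mul_eq_one u (by rwa [mul_comm]))
      (by simpa [hj] using hv)
  · left
    have hi : i = 0 := by omega
    exact isUnit_of_natDegree_eq_zero hi (IsUnit.of_mul_eq_one v huv) (by simpa [hi] using hu)

theorem irreducible_binomialPoly {m : ℕ} (hm : m ≠ 0) :
    Irreducible (⟨binomialPoly m, binomialPoly_mem m⟩ : IntValued) :=
  irreducible_of_leadingCoeff_eq_inv_factorial (by rwa [natDegree_binomialPoly])
    (by rw [natDegree_binomialPoly, leadingCoeff_binomialPoly])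

theorem irreducible_binomialPoly_comp_X_sub_one {m : ℕ} (hm : m ≠ 0) :
    Irreducible (⟨(binomialPoly m).comp (X - 1),
      comp_mem (binomialPoly_mem m) (sub_mem Xiv.2 (one_mem _))⟩ : IntValued) := by
  have hX : (X - 1 : ℚ[X]).natDegree = 1 := by simpa using natDegree_X_sub_C (1 : ℚ)
  have hX' : (X - 1 : ℚ[X]).Monic := by simpa using monic_X_sub_C (1 : ℚ)
  have hdeg : ((binomialPoly m).comp (X - 1)).natDegree = m := by
    rw [natDegree_comp, hX, mul_one, natDegree_binomialPoly]
  refine irreducible_of_leadingCoeff_eq_inv_factorial (hdeg.trans_ne hm) ?_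
  rw [hdeg, leadingCoeff_comp (by rw [hX]; exact one_ne_zero), hX'.leadingCoeff, one_pow, mul_one,
    leadingCoeff_binomialPoly]

end IntValued

/-- Lengths of factorizations of `X · H`, for irreducible `H`, are unbounded:
for every `N` there is an irreducible `H ∈ Int(ℤ)` such that `L(X · H)` contains
some `k ≥ N`. -/
theorem lengths_of_x_mul_irreducible_unbounded (N : ℕ) :
    ∃ H : IntValued, Irreducible H ∧
      ∃ k : ℕ, N ≤ k ∧
        ∃ l : Multiset IntValued, Multiset.card l = k ∧ (∀ g ∈ l, Irreducible g) ∧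
          l.prod = Xiv * H := by
  set n := 2 ^ (N + 1) - 1
  have hn : n + 1 = 2 ^ (N + 1) := Nat.sub_add_cancel Nat.one_le_two_pow
  have hn0 : n ≠ 0 := by have := Nat.one_lt_two_pow (n := N + 1) (by omega); omega
  refine ⟨_, IntValued.irreducible_binomialPoly_comp_X_sub_one hn0, N + 2, by omega,
    ⟨binomialPoly (n + 1), binomialPoly_mem _⟩ ::ₘ Multiset.replicate (N + 1) 2,
    by simp, ?_, ?_⟩
  · rintro g hg
    rcases Multiset.mem_cons.mp hg with rfl | hg
    · exact IntValued.irreducible_binomialPoly n.succ_ne_zero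
    · rw [Multiset.eq_of_mem_replicate hg]
      exact_mod_cast IntValued.irreducible_intCast Int.prime_two.irreducible
  · rw [Multiset.prod_cons, Multiset.prod_replicate, mul_comm]
    apply Subtype.ext
    rw [Subring.coe_mul, Subring.coe_mul, show (Xiv : ℚ[X]) = X from rfl,
      X_mul_binomialPoly_comp_X_sub_one]
    congr 1
    exact_mod_cast hn.symm
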